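/- arXiv:2312.02631 — 2 statements merged into one kernel-verified Lean document; each statement's English description precedes it below -/
import Mathlib

section
/- Let a, b > 0 with ab < 1. There exists a unique θ₁ ∈ (0, π/2) such that A sin(2θ₁ − 2τ) = ν + (1−ν) cos²θ₁ and 2A cos(2θ₁ − 2τ) = −(1−ν) sin 2θ₁; it is characterized by cos 2θ₁ = ((ν−1) − 2A sin 2τ)/(1+ν) and sin 2θ₁ = 2A cos 2τ/(1+ν). -/
open MeasureTheory Real Set

noncomputable def fourierT (f : ℝ → ℂ) (ξ : ℝ) : ℂ :=
  (1 / Real.sqrt (2 * Real.pi) : ℝ) * ∫ x : ℝ, f x * Complex.exp (-(Complex.I * (ξ : ℂ) * (x : ℂ)))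

noncomputable def bargmann (f : ℝ → ℂ) (w : ℂ) : ℂ :=
  (Complex.exp (-w ^ 2 / 4) / (Real.sqrt Real.pi : ℂ)) *
    ∫ x : ℝ, Complex.exp ((x : ℂ) * w - (x : ℂ) ^ 2 / 2) * f x

def memE (a b : ℝ) (f : ℝ → ℂ) : Prop :=
  MeasureTheory.Integrable f ∧ ∃ C : ℝ,
    (∀ x : ℝ, ‖f x‖ ≤ C * Real.exp (-a * x ^ 2 / 2)) ∧
    (∀ ξ : ℝ, ‖fourierT f ξ‖ ≤ C * Real.exp (-b * ξ ^ 2 / 2))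

noncomputable def physHermite (n : ℕ) (x : ℝ) : ℝ :=
  (-1) ^ n * Real.exp (x ^ 2) * iteratedDeriv n (fun y => Real.exp (-y ^ 2)) x

noncomputable def hermiteFn (n : ℕ) (x : ℝ) : ℝ :=
  (Real.sqrt (2 ^ n * n.factorial * Real.sqrt Real.pi))⁻¹ * physHermite n x *
    Real.exp (-x ^ 2 / 2)

noncomputable def hermiteCoeff (f : ℝ → ℂ) (n : ℕ) : ℂ :=
  ∫ x : ℝ, f x * (hermiteFn n x : ℂ)

/-! Write `P = a + b - 2ab` and `Q = a + b + 2ab`, so that `A² = P / Q` and, after clearing the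
Möbius substitutions, `sin 2τ = (a - b) / √(PQ)`. These give the single relation
`A² + A (1 - ν) sin 2τ = ν`, under which the two trigonometric equations are equivalent to the stated
values of `cos 2θ₁` and `sin 2θ₁`; these values lie on the unit circle with positive sine because
`cos 2τ > 0`, so they determine `2θ₁ ∈ (0, π)` uniquely. -/

section TrigSystem

variable {A ν τ : ℝ}

theorem trig_system_iff (hν : 1 + ν ≠ 0) (hK : A ^ 2 + A * (1 - ν) * sin (2 * τ) = ν) (θ : ℝ) :
    (A * sin (2 * θ - 2 * τ) = ν + (1 - ν) * cos θ ^ 2 ∧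
        2 * A * cos (2 * θ - 2 * τ) = -((1 - ν) * sin (2 * θ))) ↔
      (cos (2 * θ) = ((ν - 1) - 2 * A * sin (2 * τ)) / (1 + ν) ∧
        sin (2 * θ) = 2 * A * cos (2 * τ) / (1 + ν)) := by
  have hp := sin_sq_add_cos_sq (2 * τ)
  rw [sin_sub, cos_sub, cos_sq θ, eq_div_iff hν, eq_div_iff hν]
  constructor
  · rintro ⟨e1, e2⟩
    constructor
    · refine mul_right_cancel₀ hν ?_
      linear_combination (-2 * ((1 - ν) + 2 * A * sin (2 * τ))) * e1
        + (2 * A * cos (2 * τ)) * e2 + (-4 * cos (2 * θ)) * hK + (-4 * cos (2 * θ) * A ^ 2) * hp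
    · refine mul_right_cancel₀ hν ?_
      linear_combination (4 * A * cos (2 * τ)) * e1 + ((1 - ν) + 2 * A * sin (2 * τ)) * e2
        + (-4 * sin (2 * θ)) * hK + (-4 * sin (2 * θ) * A ^ 2) * hp
  · rintro ⟨hc, hs⟩
    rw [← eq_div_iff hν] at hc hs
    rw [hc, hs]
    constructor
    · field_simp
      linear_combination (4 * A ^ 2) * hp + 4 * hK
    · field_simp
      ring

theorem trig_system_solution_sq_add_sq (hν : 1 + ν ≠ 0)
    (hK : A ^ 2 + A * (1 - ν) * sin (2 * τ) = ν) :
    (((ν - 1) - 2 * A * sin (2 * τ)) / (1 + ν)) ^ 2 + (2 * A * cos (2 * τ) / (1 + ν)) ^ 2 = 1 := by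
  field_simp
  linear_combination 4 * hK + 4 * A ^ 2 * sin_sq_add_cos_sq (2 * τ)

end TrigSystem

theorem existsUnique_mem_Ioo_cos_sin_two_mul {c s : ℝ} (hcs : c ^ 2 + s ^ 2 = 1) (hs : 0 < s) :
    ∃! θ : ℝ, θ ∈ Ioo 0 (π / 2) ∧ cos (2 * θ) = c ∧ sin (2 * θ) = s := by
  obtain ⟨hc₁, hc₂⟩ : -1 < c ∧ c < 1 := abs_lt.1 ((sq_lt_one_iff_abs_lt_one c).1 (by nlinarith))
  have hmem : arccos c / 2 ∈ Ioo 0 (π / 2) :=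
    ⟨by linarith [arccos_pos.2 hc₂], by linarith [arccos_lt_pi.2 hc₁]⟩
  have hcos : cos (2 * (arccos c / 2)) = c := by
    rw [mul_div_cancel₀ _ two_ne_zero, cos_arccos hc₁.le hc₂.le]
  refine ⟨arccos c / 2, ⟨hmem, hcos, ?_⟩, ?_⟩
  · rw [mul_div_cancel₀ _ two_ne_zero, sin_arccos, ← hcs, add_sub_cancel_left, sqrt_sq hs.le]
  · rintro θ ⟨hθ, hθc, -⟩
    have := injOn_cos ⟨by linarith [hθ.1], by linarith [hθ.2]⟩
      ⟨by linarith [hmem.1], by linarith [hmem.2]⟩ (hθc.trans hcos.symm)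
    linarith

theorem sqrt_div_mul_div_sqrt_mul {P Q : ℝ} (hP : 0 < P) (hQ : 0 < Q) (x : ℝ) :
    √(P / Q) * (x / √(P * Q)) = x / Q := by
  rw [sqrt_div hP.le, sqrt_mul hP.le]
  field_simp
  rw [sq_sqrt hQ.le, mul_comm]

section Parameters

variable {a b μ ν : ℝ}

theorem sub_div_sqrt_eq_of_moebius (ha : 0 < a) (hb : 0 < b)
    (hμ : μ = (1 - a) / (1 + a)) (hν : ν = (1 - b) / (1 + b)) :
    (ν - μ) / √((μ + ν - 2 * μ * ν) * (2 - μ - ν))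
      = (a - b) / √((a + b - 2 * a * b) * (a + b + 2 * a * b)) := by
  have hprod : (μ + ν - 2 * μ * ν) * (2 - μ - ν)
      = (2 / ((1 + a) * (1 + b))) ^ 2 * ((a + b - 2 * a * b) * (a + b + 2 * a * b)) := by
    rw [hμ, hν]; field_simp; ring
  have hdiff : ν - μ = 2 / ((1 + a) * (1 + b)) * (a - b) := by
    rw [hμ, hν]; field_simp; ring
  rw [hprod, sqrt_mul (sq_nonneg _), sqrt_sq (by positivity), hdiff, mul_div_mul_left]
  positivity

theorem sq_add_mul_sin_eq_of_moebius (ha : 0 < a) (hb : 0 < b) (hP : 0 < a + b - 2 * a * b)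
    (hν : ν = (1 - b) / (1 + b)) {A s : ℝ}
    (hA : A = √((a + b - 2 * a * b) / (a + b + 2 * a * b)))
    (hs : s = (a - b) / √((a + b - 2 * a * b) * (a + b + 2 * a * b))) :
    A ^ 2 + A * (1 - ν) * s = ν := by
  have hQ : 0 < a + b + 2 * a * b := by positivity
  have hAs : A * s = (a - b) / (a + b + 2 * a * b) := by
    rw [hA, hs, sqrt_div_mul_div_sqrt_mul hP hQ]
  rw [mul_right_comm, hAs, hA, sq_sqrt (div_pos hP hQ).le, hν]
  field_simp
  ring

end Parameters

theorem stmt4 (a b : ℝ) (ha : 0 < a) (hb : 0 < b) (hab : a * b < 1)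
    (μ ν A τ : ℝ) (hμ : μ = (1 - a) / (1 + a)) (hν : ν = (1 - b) / (1 + b))
    (hA : A = Real.sqrt ((a + b - 2 * a * b) / (a + b + 2 * a * b)))
    (hτ : τ ∈ Set.Ioo (-(π / 4)) (π / 4))
    (hτs : Real.sin (2 * τ)
      = (ν - μ) / Real.sqrt ((μ + ν - 2 * μ * ν) * (2 - μ - ν))) :
    (∃! θ₁ : ℝ, θ₁ ∈ Set.Ioo 0 (π / 2) ∧
      A * Real.sin (2 * θ₁ - 2 * τ) = ν + (1 - ν) * Real.cos θ₁ ^ 2 ∧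
      2 * A * Real.cos (2 * θ₁ - 2 * τ) = -((1 - ν) * Real.sin (2 * θ₁))) ∧
    ∀ θ₁ ∈ Set.Ioo 0 (π / 2),
      ((A * Real.sin (2 * θ₁ - 2 * τ) = ν + (1 - ν) * Real.cos θ₁ ^ 2 ∧
        2 * A * Real.cos (2 * θ₁ - 2 * τ) = -((1 - ν) * Real.sin (2 * θ₁))) ↔
       (Real.cos (2 * θ₁) = ((ν - 1) - 2 * A * Real.sin (2 * τ)) / (1 + ν) ∧
        Real.sin (2 * θ₁) = 2 * A * Real.cos (2 * τ) / (1 + ν))) := by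
  have hP : 0 < a + b - 2 * a * b := by
    nlinarith [sq_nonneg (a - b), mul_pos (mul_pos ha hb) (sub_pos.2 hab)]
  have hν₁ : 0 < 1 + ν := by rw [hν]; field_simp; linarith
  have hA₀ : 0 < A := hA ▸ sqrt_pos.2 (div_pos hP (by positivity))
  have hcosτ : 0 < cos (2 * τ) := cos_pos_of_mem_Ioo ⟨by linarith [hτ.1], by linarith [hτ.2]⟩
  have hK : A ^ 2 + A * (1 - ν) * sin (2 * τ) = ν :=
    sq_add_mul_sin_eq_of_moebius ha hb hP hν hA (hτs.trans (sub_div_sqrt_eq_of_moebius ha hb hμ hν))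
  have key := trig_system_iff hν₁.ne' hK
  refine ⟨?_, fun θ _ => key θ⟩
  refine (existsUnique_congr fun θ => and_congr_right' (key θ)).2 ?_
  exact existsUnique_mem_Ioo_cos_sin_two_mul (trig_system_solution_sq_add_sq hν₁.ne' hK)
    (by positivity)
end

section
/- Let a, b > 0 with ab < 1 and let n ≥ 1 be an integer. Then ∫_0^{θ₀} exp((μ + (1−μ) sin²t) n/(2A)) dt ≤ (θ₀/(τ + π/4 − θ₀)) ∫_{θ₀}^{θ₁} exp((n/2) sin(2t − 2τ)) dt, and ∫_{θ₁}^{π/2} exp((ν + (1−ν) cos²t) n/(2A)) dt ≤ ((π/2 − θ₁)/(θ₁ − τ − π/4)) ∫_{θ₀}^{θ₁} exp((n/2) sin(2t − 2τ)) dt. -/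
/-!
On `[0, θ₀]` the integrand increases, and the relations defining `A`, `τ`, `θ₀` say exactly that
its exponent at `θ₀` equals `(n/2) sin (2θ₀ - 2τ)`. On `[θ₀, τ + π/4]` the function
`sin (2t - 2τ)` increases towards its maximum. Hence the left integral is at most `θ₀` times
this common peak value, while the right one is at least `τ + π/4 - θ₀` times it.
The second inequality is the first one after `a ↔ b`, `τ ↦ -τ`, `t ↦ π/2 - t`.
-/

open MeasureTheory Real Set

theorem intervalIntegral.integral_le_div_mul_integral {f g : ℝ → ℝ} {p q r s u v m : ℝ}
    (hpq : p ≤ q) (hrs : r < s) (hur : u ≤ r) (hsv : s ≤ v)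
    (hf : IntervalIntegrable f volume p q) (hg : IntervalIntegrable g volume u v)
    (hfm : ∀ t ∈ Icc p q, f t ≤ m) (hmg : ∀ t ∈ Icc r s, m ≤ g t)
    (hg₀ : ∀ t ∈ Ioc u v, 0 ≤ g t) :
    ∫ t in p..q, f t ≤ (q - p) / (s - r) * ∫ t in u..v, g t := by
  have hf_le : ∫ t in p..q, f t ≤ (q - p) * m := by
    simpa using intervalIntegral.integral_mono_on hpq hf intervalIntegrable_const hfm
  have hg_ge : (s - r) * m ≤ ∫ t in r..s, g t := by
    simpa using intervalIntegral.integral_mono_on hrs.le intervalIntegrable_const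
      (hg.mono_set (uIcc_subset_uIcc (mem_uIcc_of_le hur (hrs.le.trans hsv))
        (mem_uIcc_of_le (hur.trans hrs.le) hsv))) hmg
  have hg_mono : ∫ t in r..s, g t ≤ ∫ t in u..v, g t :=
    intervalIntegral.integral_mono_interval hur hrs.le hsv
      ((ae_restrict_iff' measurableSet_Ioc).2 (ae_of_all _ hg₀)) hg
  have hrs' : 0 < s - r := sub_pos.2 hrs
  calc ∫ t in p..q, f t ≤ (q - p) / (s - r) * ((s - r) * m) := by
        rwa [← mul_assoc, div_mul_cancel₀ _ hrs'.ne']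
    _ ≤ (q - p) / (s - r) * ∫ t in u..v, g t := by
        gcongr
        exact hg_ge.trans hg_mono

theorem add_sub_two_mul_pos {a b : ℝ} (ha : 0 < a) (hb : 0 < b) (hab : a * b < 1) :
    0 < a + b - 2 * a * b := by
  nlinarith [sq_nonneg (a - b), mul_pos (mul_pos ha hb) (sub_pos.2 hab)]

theorem one_sub_div_one_add_mem_Ioo {a : ℝ} (ha : 0 < a) : (1 - a) / (1 + a) ∈ Ioo (-1) 1 := by
  have h : 0 < 1 + a := by linarith
  constructor
  · rw [lt_div_iff₀ h]; linarith
  · rw [div_lt_one h]; linarith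

theorem mul_one_sub_mul_eq_sq_sub {a b μ ν A s : ℝ} (ha : 0 < a) (hb : 0 < b) (hab : a * b < 1)
    (hμ : μ = (1 - a) / (1 + a)) (hν : ν = (1 - b) / (1 + b))
    (hA : A = √((a + b - 2 * a * b) / (a + b + 2 * a * b)))
    (hs : s = (ν - μ) / √((μ + ν - 2 * μ * ν) * (2 - μ - ν))) :
    A * (1 - μ) * s = A ^ 2 - μ := by
  set P := a + b - 2 * a * b
  set Q := a + b + 2 * a * b
  have hP : 0 < P := add_sub_two_mul_pos ha hb hab
  have hQ : 0 < Q := by positivity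
  have hsqrt : √((μ + ν - 2 * μ * ν) * (2 - μ - ν)) = 2 / ((1 + a) * (1 + b)) * √(P * Q) := by
    rw [← sqrt_sq (by positivity : 0 ≤ 2 / ((1 + a) * (1 + b))), ← sqrt_mul (by positivity)]
    congr 1
    rw [hμ, hν]; field_simp; ring
  have hAs : A * s = (a - b) / Q := by
    rw [hA, hs, hsqrt, hμ, hν, show P / Q = P * Q / Q ^ 2 by field_simp,
      sqrt_div' _ (sq_nonneg Q), sqrt_sq hQ.le]
    have : √(P * Q) ≠ 0 := by positivity
    field_simp
    ring
  have hA2 : A ^ 2 = P / Q := by rw [hA, sq_sqrt (by positivity)]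
  rw [mul_right_comm, hAs, hA2, hμ]
  field_simp
  ring

theorem cos_two_mul_sub_eq {μ A τ θ : ℝ} (hμ : 1 + μ ≠ 0)
    (hc : cos (2 * θ) = ((1 - μ) - 2 * A * sin (2 * τ)) / (1 + μ))
    (hs : sin (2 * θ) = 2 * A * cos (2 * τ) / (1 + μ)) :
    cos (2 * θ - 2 * τ) = (1 - μ) * cos (2 * τ) / (1 + μ) := by
  rw [cos_sub, hc, hs]
  field_simp
  ring

theorem add_one_sub_mul_sin_sq_eq {μ A τ θ : ℝ} (hμ : 1 + μ ≠ 0)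
    (hkey : A * (1 - μ) * sin (2 * τ) = A ^ 2 - μ)
    (hc : cos (2 * θ) = ((1 - μ) - 2 * A * sin (2 * τ)) / (1 + μ))
    (hs : sin (2 * θ) = 2 * A * cos (2 * τ) / (1 + μ)) :
    μ + (1 - μ) * sin θ ^ 2 = A * sin (2 * θ - 2 * τ) := by
  rw [sin_sq_eq_half_sub, sin_sub, hc, hs]
  field_simp
  linear_combination 4 * hkey - 4 * A ^ 2 * sin_sq_add_cos_sq (2 * τ)

theorem lt_add_pi_div_four {μ A τ θ : ℝ} (hμ : μ ∈ Ioo (-1) 1) (hτ : τ ∈ Ioo (-(π / 4)) (π / 4))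
    (hθ : θ < π / 2)
    (hc : cos (2 * θ) = ((1 - μ) - 2 * A * sin (2 * τ)) / (1 + μ))
    (hs : sin (2 * θ) = 2 * A * cos (2 * τ) / (1 + μ)) :
    θ < τ + π / 4 := by
  have hcos : 0 < cos (2 * θ - 2 * τ) := by
    rw [cos_two_mul_sub_eq (by linarith [hμ.1]) hc hs]
    have : 0 < cos (2 * τ) := cos_pos_of_mem_Ioo ⟨by linarith [hτ.1], by linarith [hτ.2]⟩
    exact div_pos (mul_pos (by linarith [hμ.2]) this) (by linarith [hμ.1])
  by_contra! h
  exact hcos.not_ge (cos_nonpos_of_pi_div_two_le_of_le (by linarith) (by linarith [hτ.1]))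

theorem integral_exp_sin_sq_le {μ A τ θ₀ θ₁ : ℝ} (n : ℕ) (hμ : μ ∈ Ioo (-1) 1) (hA : 0 < A)
    (hkey : A * (1 - μ) * sin (2 * τ) = A ^ 2 - μ) (hτ : τ ∈ Ioo (-(π / 4)) (π / 4))
    (hθ₀ : θ₀ ∈ Ioo 0 (π / 2))
    (hc : cos (2 * θ₀) = ((1 - μ) - 2 * A * sin (2 * τ)) / (1 + μ))
    (hs : sin (2 * θ₀) = 2 * A * cos (2 * τ) / (1 + μ)) (hθ₁ : τ + π / 4 ≤ θ₁) :
    ∫ t in (0 : ℝ)..θ₀, exp ((μ + (1 - μ) * sin t ^ 2) * n / (2 * A)) ≤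
      θ₀ / (τ + π / 4 - θ₀) * ∫ t in θ₀..θ₁, exp (n / 2 * sin (2 * t - 2 * τ)) := by
  have hθτ : θ₀ < τ + π / 4 := lt_add_pi_div_four hμ hτ hθ₀.2 hc hs
  have hpeak : (μ + (1 - μ) * sin θ₀ ^ 2) * n / (2 * A) = n / 2 * sin (2 * θ₀ - 2 * τ) := by
    rw [add_one_sub_mul_sin_sq_eq (by linarith [hμ.1]) hkey hc hs]
    field_simp
  have hf : ∀ t ∈ Icc 0 θ₀, exp ((μ + (1 - μ) * sin t ^ 2) * n / (2 * A)) ≤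
      exp (n / 2 * sin (2 * θ₀ - 2 * τ)) := by
    intro t ht
    rw [← hpeak]
    have : sin t ≤ sin θ₀ := sin_le_sin_of_le_of_le_pi_div_two (by linarith [ht.1, pi_pos])
      hθ₀.2.le ht.2
    have : 0 ≤ sin t := sin_nonneg_of_nonneg_of_le_pi ht.1 (by linarith [ht.2, hθ₀.2, pi_pos])
    have : 0 ≤ 1 - μ := by linarith [hμ.2]
    gcongr
  have hg : ∀ t ∈ Icc θ₀ (τ + π / 4), exp (n / 2 * sin (2 * θ₀ - 2 * τ)) ≤
      exp (n / 2 * sin (2 * t - 2 * τ)) := by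
    intro t ht
    have : sin (2 * θ₀ - 2 * τ) ≤ sin (2 * t - 2 * τ) :=
      sin_le_sin_of_le_of_le_pi_div_two (by linarith [hθ₀.1, hτ.2]) (by linarith [ht.2])
        (by linarith [ht.1])
    gcongr
  simpa using intervalIntegral.integral_le_div_mul_integral hθ₀.1.le hθτ le_rfl hθ₁
    ((continuous_exp.comp (by fun_prop)).intervalIntegrable _ _)
    ((continuous_exp.comp (by fun_prop)).intervalIntegrable _ _) hf hg (fun t _ => (exp_pos _).le)

theorem cos_two_mul_pi_div_two_sub_eq {ν A τ θ : ℝ}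
    (hc : cos (2 * θ) = ((ν - 1) - 2 * A * sin (2 * τ)) / (1 + ν)) :
    cos (2 * (π / 2 - θ)) = ((1 - ν) - 2 * A * sin (2 * -τ)) / (1 + ν) := by
  rw [show 2 * (π / 2 - θ) = π - 2 * θ by ring, cos_pi_sub, hc, mul_neg, sin_neg]
  ring

theorem sin_two_mul_pi_div_two_sub_eq {ν A τ θ : ℝ}
    (hs : sin (2 * θ) = 2 * A * cos (2 * τ) / (1 + ν)) :
    sin (2 * (π / 2 - θ)) = 2 * A * cos (2 * -τ) / (1 + ν) := by
  rw [show 2 * (π / 2 - θ) = π - 2 * θ by ring, sin_pi_sub, hs, mul_neg, cos_neg]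

theorem add_pi_div_four_lt {ν A τ θ : ℝ} (hν : ν ∈ Ioo (-1) 1) (hτ : τ ∈ Ioo (-(π / 4)) (π / 4))
    (hθ : 0 < θ)
    (hc : cos (2 * θ) = ((ν - 1) - 2 * A * sin (2 * τ)) / (1 + ν))
    (hs : sin (2 * θ) = 2 * A * cos (2 * τ) / (1 + ν)) :
    τ + π / 4 < θ := by
  have := lt_add_pi_div_four hν ⟨by linarith [hτ.2], by linarith [hτ.1]⟩ (by linarith)
    (cos_two_mul_pi_div_two_sub_eq hc) (sin_two_mul_pi_div_two_sub_eq hs)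
  linarith

theorem integral_exp_cos_sq_le {ν A τ θ₀ θ₁ : ℝ} (n : ℕ) (hν : ν ∈ Ioo (-1) 1) (hA : 0 < A)
    (hkey : A * (1 - ν) * sin (2 * τ) = ν - A ^ 2) (hτ : τ ∈ Ioo (-(π / 4)) (π / 4))
    (hθ₁ : θ₁ ∈ Ioo 0 (π / 2))
    (hc : cos (2 * θ₁) = ((ν - 1) - 2 * A * sin (2 * τ)) / (1 + ν))
    (hs : sin (2 * θ₁) = 2 * A * cos (2 * τ) / (1 + ν)) (hθ₀ : θ₀ ≤ τ + π / 4) :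
    ∫ t in θ₁..(π / 2), exp ((ν + (1 - ν) * cos t ^ 2) * n / (2 * A)) ≤
      (π / 2 - θ₁) / (θ₁ - τ - π / 4) * ∫ t in θ₀..θ₁, exp (n / 2 * sin (2 * t - 2 * τ)) := by
  have h := integral_exp_sin_sq_le (τ := -τ) (θ₀ := π / 2 - θ₁) (θ₁ := π / 2 - θ₀) n hν hA
    (by rw [mul_neg, sin_neg]; linear_combination -hkey)
    ⟨by linarith [hτ.2], by linarith [hτ.1]⟩ ⟨by linarith [hθ₁.2], by linarith [hθ₁.1]⟩
    (cos_two_mul_pi_div_two_sub_eq hc) (sin_two_mul_pi_div_two_sub_eq hs) (by linarith)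
  have hL : ∫ t in θ₁..(π / 2), exp ((ν + (1 - ν) * cos t ^ 2) * n / (2 * A)) =
      ∫ t in (0 : ℝ)..(π / 2 - θ₁), exp ((ν + (1 - ν) * sin t ^ 2) * n / (2 * A)) := by
    simpa [sin_pi_div_two_sub] using intervalIntegral.integral_comp_sub_left
      (a := θ₁) (b := π / 2) (fun t => exp ((ν + (1 - ν) * sin t ^ 2) * n / (2 * A))) (π / 2)
  have hR : ∫ t in θ₀..θ₁, exp (n / 2 * sin (2 * t - 2 * τ)) =
      ∫ t in (π / 2 - θ₁)..(π / 2 - θ₀), exp (n / 2 * sin (2 * t - 2 * -τ)) := by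
    rw [← intervalIntegral.integral_comp_sub_left]
    congr 1 with t
    rw [show 2 * (π / 2 - t) - 2 * -τ = π - (2 * t - 2 * τ) by ring, sin_pi_sub]
  rwa [hL, hR, show θ₁ - τ - π / 4 = -τ + π / 4 - (π / 2 - θ₁) by ring]

theorem stmt13_general (a b : ℝ) (ha : 0 < a) (hb : 0 < b) (hab : a * b < 1)
    (μ ν A τ θ₀ θ₁ : ℝ) (hμ : μ = (1 - a) / (1 + a)) (hν : ν = (1 - b) / (1 + b))
    (hA : A = Real.sqrt ((a + b - 2 * a * b) / (a + b + 2 * a * b)))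
    (hτ : τ ∈ Set.Ioo (-(π / 4)) (π / 4))
    (hτs : Real.sin (2 * τ)
      = (ν - μ) / Real.sqrt ((μ + ν - 2 * μ * ν) * (2 - μ - ν)))
    (hθ₀ : θ₀ ∈ Set.Ioo 0 (π / 2))
    (hθ₀c : Real.cos (2 * θ₀) = ((1 - μ) - 2 * A * Real.sin (2 * τ)) / (1 + μ))
    (hθ₀s : Real.sin (2 * θ₀) = 2 * A * Real.cos (2 * τ) / (1 + μ))
    (hθ₁ : θ₁ ∈ Set.Ioo 0 (π / 2))
    (hθ₁c : Real.cos (2 * θ₁) = ((ν - 1) - 2 * A * Real.sin (2 * τ)) / (1 + ν))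
    (hθ₁s : Real.sin (2 * θ₁) = 2 * A * Real.cos (2 * τ) / (1 + ν))
    (n : ℕ) :
    (∫ t in (0 : ℝ)..θ₀,
        Real.exp ((μ + (1 - μ) * Real.sin t ^ 2) * n / (2 * A))) ≤
      (θ₀ / (τ + π / 4 - θ₀)) *
        ∫ t in θ₀..θ₁, Real.exp ((n / 2) * Real.sin (2 * t - 2 * τ)) ∧
    (∫ t in θ₁..(π / 2),
        Real.exp ((ν + (1 - ν) * Real.cos t ^ 2) * n / (2 * A))) ≤
      ((π / 2 - θ₁) / (θ₁ - τ - π / 4)) *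
        ∫ t in θ₀..θ₁, Real.exp ((n / 2) * Real.sin (2 * t - 2 * τ)) := by
  have hApos : 0 < A := hA ▸ sqrt_pos.2 (div_pos (add_sub_two_mul_pos ha hb hab) (by positivity))
  have hμ' : μ ∈ Ioo (-1) 1 := hμ ▸ one_sub_div_one_add_mem_Ioo ha
  have hν' : ν ∈ Ioo (-1) 1 := hν ▸ one_sub_div_one_add_mem_Ioo hb
  have hkeyμ : A * (1 - μ) * sin (2 * τ) = A ^ 2 - μ :=
    mul_one_sub_mul_eq_sq_sub ha hb hab hμ hν hA hτs
  have hkeyν : A * (1 - ν) * sin (2 * τ) = ν - A ^ 2 := by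
    have := mul_one_sub_mul_eq_sq_sub (A := A) (s := -sin (2 * τ)) hb ha (by linarith [mul_comm a b])
      hν hμ (by rw [hA]; ring_nf) (by rw [hτs]; ring_nf)
    linear_combination -this
  have hθ₀τ : θ₀ < τ + π / 4 := lt_add_pi_div_four hμ' hτ hθ₀.2 hθ₀c hθ₀s
  have hτθ₁ : τ + π / 4 < θ₁ := add_pi_div_four_lt hν' hτ hθ₁.1 hθ₁c hθ₁s
  exact ⟨integral_exp_sin_sq_le n hμ' hApos hkeyμ hτ hθ₀ hθ₀c hθ₀s hτθ₁.le,
    integral_exp_cos_sq_le n hν' hApos hkeyν hτ hθ₁ hθ₁c hθ₁s hθ₀τ.le⟩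

theorem stmt13 (a b : ℝ) (ha : 0 < a) (hb : 0 < b) (hab : a * b < 1)
    (μ ν A τ θ₀ θ₁ : ℝ) (hμ : μ = (1 - a) / (1 + a)) (hν : ν = (1 - b) / (1 + b))
    (hA : A = Real.sqrt ((a + b - 2 * a * b) / (a + b + 2 * a * b)))
    (hτ : τ ∈ Set.Ioo (-(π / 4)) (π / 4))
    (hτs : Real.sin (2 * τ)
      = (ν - μ) / Real.sqrt ((μ + ν - 2 * μ * ν) * (2 - μ - ν)))
    (hθ₀ : θ₀ ∈ Set.Ioo 0 (π / 2))
    (hθ₀c : Real.cos (2 * θ₀) = ((1 - μ) - 2 * A * Real.sin (2 * τ)) / (1 + μ))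
    (hθ₀s : Real.sin (2 * θ₀) = 2 * A * Real.cos (2 * τ) / (1 + μ))
    (hθ₁ : θ₁ ∈ Set.Ioo 0 (π / 2))
    (hθ₁c : Real.cos (2 * θ₁) = ((ν - 1) - 2 * A * Real.sin (2 * τ)) / (1 + ν))
    (hθ₁s : Real.sin (2 * θ₁) = 2 * A * Real.cos (2 * τ) / (1 + ν))
    (n : ℕ) (hn : 1 ≤ n) :
    (∫ t in (0 : ℝ)..θ₀,
        Real.exp ((μ + (1 - μ) * Real.sin t ^ 2) * n / (2 * A))) ≤
      (θ₀ / (τ + π / 4 - θ₀)) *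
        ∫ t in θ₀..θ₁, Real.exp ((n / 2) * Real.sin (2 * t - 2 * τ)) ∧
    (∫ t in θ₁..(π / 2),
        Real.exp ((ν + (1 - ν) * Real.cos t ^ 2) * n / (2 * A))) ≤
      ((π / 2 - θ₁) / (θ₁ - τ - π / 4)) *
        ∫ t in θ₀..θ₁, Real.exp ((n / 2) * Real.sin (2 * t - 2 * τ)) :=
  stmt13_general a b ha hb hab μ ν A τ θ₀ θ₁ hμ hν hA hτ hτs hθ₀ hθ₀c hθ₀s hθ₁ hθ₁c hθ₁s n
end
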